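/- arXiv:math/0611840 — 4 statements merged into one kernel-verified Lean document; each statement's English description precedes it below -/
import Mathlib

section
/- Let b = (b_i^ρ) satisfy the commutation relations b_j^{ρρ_i} b_i^ρ = b_i^{ρρ_j} b_j^ρ, and let M_b = ⟨x_i e_ρ − b_i^ρ e_{ρρ_i} : 1 ≤ i ≤ n, ρ ∈ G*⟩ ⊆ A. Then the quotient A/M_b has G*-graded Hilbert function identically equal to 1: dim_k (A/M_b)_ρ = 1 for every ρ ∈ G*. -/
/-!
Reducing modulo `M_b`, multiplication by `x_i` sends `e_σ` to `b_i^σ e_{σρ_i}`. Thanks to the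
commutation relations the scalar `W(σ, u)` collected along the way does not depend on the order
in which the variables of `x^u` are multiplied in, so `x^u e_σ ≡ W(σ, u) e_{σ·deg u}`, and the
degree-`ρ` piece of `A/M_b` is spanned by the class of `e_ρ`. That class is nonzero: the
`k`-linear functional `x^u e_σ ↦ W(σ, u)` vanishes on `M_b` and takes the value `1` on `e_ρ`.
-/

open MvPolynomial

section

variable {k : Type*} [Field k] {G : Type*} [CommGroup G] {n : ℕ}

/-- The free `S`-module `A = ⊕_{ρ ∈ G*} S e_ρ`, with `G* = Hom(G, kˣ)`. -/
abbrev Acar (k : Type*) [Field k] (G : Type*) [CommGroup G] (n : ℕ) :=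
  (G →* kˣ) →₀ MvPolynomial (Fin n) k

/-- The `G*`-degree of a monomial exponent vector: `deg(x^u) = ∏ χᵢ^{uᵢ}`. -/
def degMon (χ : Fin n → G →* kˣ) (u : Fin n →₀ ℕ) : G →* kˣ :=
  u.prod fun i e => χ i ^ e

/-- The generator `x_i e_ρ − b_i^ρ e_{ρρ_i}` of the left `A`-ideal `M_b`. -/
noncomputable def gen (χ : Fin n → G →* kˣ) (b : Fin n → (G →* kˣ) → k)
    (i : Fin n) (ρ : G →* kˣ) : Acar k G n :=
  Finsupp.single ρ (X i) - Finsupp.single (ρ * χ i) (C (b i ρ))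

/-- The submodule `M_b ⊆ A` generated by the `x_i e_ρ − b_i^ρ e_{ρρ_i}`. -/
noncomputable def Mb (χ : Fin n → G →* kˣ) (b : Fin n → (G →* kˣ) → k) :
    Submodule (MvPolynomial (Fin n) k) (Acar k G n) :=
  Submodule.span _ (Set.range fun p : Fin n × (G →* kˣ) => gen χ b p.1 p.2)

/-- The degree-`ρ` homogeneous component of `A`: the `k`-span of the monomials
`x^u e_σ` with `deg(x^u) σ = ρ`. -/
noncomputable def homPiece (k : Type*) [Field k] (χ : Fin n → G →* kˣ) (ρ : G →* kˣ) :
    Submodule k (Acar k G n) :=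
  Submodule.span k {f | ∃ (u : Fin n →₀ ℕ) (σ : G →* kˣ),
    degMon χ u * σ = ρ ∧ f = Finsupp.single σ (monomial u 1)}

theorem Finsupp.induction_add_single_one {ι : Type*} {motive : (ι →₀ ℕ) → Prop}
    (zero : motive 0) (add_single : ∀ u i, motive u → motive (u + Finsupp.single i 1))
    (u : ι →₀ ℕ) : motive u := by
  classical
  rw [← Finsupp.toMultiset_toFinsupp u]
  induction Finsupp.toMultiset u using Multiset.induction_on with
  | empty => simpa using zero
  | cons i s ih =>
    rw [← Multiset.singleton_add, add_comm, Multiset.toFinsupp_add,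
      Multiset.toFinsupp_singleton]
    exact add_single _ i ih

-- `degMon` multiplies through another instance path than `σ * _`, so a lemma `degMon χ 0 = 1`
-- would not rewrite under `mul_one`; this form is closed by unfolding.
lemma mul_degMon_zero (χ : Fin n → G →* kˣ) (σ : G →* kˣ) : σ * degMon χ 0 = σ :=
  mul_one σ

lemma degMon_add_single (χ : Fin n → G →* kˣ) (u : Fin n →₀ ℕ) (i : Fin n) :
    degMon χ (u + Finsupp.single i 1) = degMon χ u * χ i := by
  rw [degMon, Finsupp.prod_add_index' (fun _ => pow_zero _) (fun _ => pow_add _),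
    Finsupp.prod_single_index (h := fun j e => χ j ^ e) (pow_zero _), pow_one]
  rfl

variable (χ : Fin n → G →* kˣ) (b : Fin n → (G →* kˣ) → k)

def CommRel : Prop :=
  ∀ (i j : Fin n) (ρ : G →* kˣ), b j (ρ * χ i) * b i ρ = b i (ρ * χ j) * b j ρ

def weightStep (i : Fin n) (w : (G →* kˣ) → k) (σ : G →* kˣ) : k := b i σ * w (σ * χ i)

variable {χ b}

lemma CommRel.leftCommutative (hb : CommRel χ b) : LeftCommutative (weightStep χ b) where
  left_comm i j w := funext fun σ => by
    simp only [weightStep, mul_right_comm σ (χ i) (χ j), ← mul_assoc]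
    rw [mul_comm (b i σ), hb i j σ, mul_comm (b i (σ * χ j))]

noncomputable def weight (hb : CommRel χ b) (σ : G →* kˣ) (u : Fin n →₀ ℕ) : k :=
  haveI := hb.leftCommutative
  (Finsupp.toMultiset u).foldr (weightStep χ b) 1 σ

@[simp]
lemma weight_zero (hb : CommRel χ b) (σ : G →* kˣ) : weight hb σ 0 = 1 := by
  simp [weight]

lemma weight_add_single (hb : CommRel χ b) (σ : G →* kˣ) (u : Fin n →₀ ℕ) (i : Fin n) :
    weight hb σ (u + Finsupp.single i 1) = b i σ * weight hb (σ * χ i) u := by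
  have := hb.leftCommutative
  simp only [weight, Finsupp.toMultiset_add, Finsupp.toMultiset_single, one_smul, add_comm _ {i},
    Multiset.singleton_add, Multiset.foldr_cons, weightStep]

lemma mkQ_single_mul_X (σ : G →* kˣ) (p : MvPolynomial (Fin n) k) (i : Fin n) :
    (Mb χ b).mkQ (Finsupp.single σ (p * X i)) =
      b i σ • (Mb χ b).mkQ (Finsupp.single (σ * χ i) p) := by
  have hgen : p • gen χ b i σ ∈ Mb χ b :=
    Submodule.smul_mem _ p (Submodule.subset_span ⟨(i, σ), rfl⟩)
  have hgen_eq : p • gen χ b i σ =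
      Finsupp.single σ (p * X i) - b i σ • Finsupp.single (σ * χ i) p := by
    rw [gen, smul_sub, Finsupp.smul_single', Finsupp.smul_single', Finsupp.smul_single,
      smul_eq_C_mul, mul_comm (C (b i σ))]
  rw [← LinearMap.map_smul_of_tower, Submodule.mkQ_apply, Submodule.mkQ_apply,
    Submodule.Quotient.eq, ← hgen_eq]
  exact hgen

lemma mkQ_single_monomial (hb : CommRel χ b) (u : Fin n →₀ ℕ) (σ : G →* kˣ) :
    (Mb χ b).mkQ (Finsupp.single σ (monomial u 1)) =
      weight hb σ u • (Mb χ b).mkQ (Finsupp.single (σ * degMon χ u) 1) := by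
  induction u using Finsupp.induction_add_single_one generalizing σ with
  | zero => rw [mul_degMon_zero, weight_zero, one_smul, ← C_1, C_apply]
  | add_single u i ih =>
    rw [monomial_add_single, pow_one, mkQ_single_mul_X, ih, smul_smul, weight_add_single,
      degMon_add_single, mul_right_comm σ (χ i), mul_assoc]

noncomputable def weightFunctional (hb : CommRel χ b) : Acar k G n →ₗ[k] k :=
  Finsupp.lsum k fun σ => (basisMonomials (Fin n) k).constr k (weight hb σ)

lemma weightFunctional_single_monomial (hb : CommRel χ b) (σ : G →* kˣ) (u : Fin n →₀ ℕ)
    (c : k) : weightFunctional hb (Finsupp.single σ (monomial u c)) = c * weight hb σ u := by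
  have hbasis : monomial u c = c • basisMonomials (Fin n) k u := by
    rw [coe_basisMonomials, smul_monomial, smul_eq_mul, mul_one]
  rw [weightFunctional, Finsupp.lsum_single, hbasis, map_smul, Module.Basis.constr_basis,
    smul_eq_mul]

lemma weightFunctional_single_mul_X (hb : CommRel χ b) (σ : G →* kˣ)
    (p : MvPolynomial (Fin n) k) (i : Fin n) :
    weightFunctional hb (Finsupp.single σ (p * X i)) =
      b i σ * weightFunctional hb (Finsupp.single (σ * χ i) p) := by
  induction p using MvPolynomial.induction_on' with
  | monomial u c =>
    rw [← pow_one (X i), ← monomial_add_single, weightFunctional_single_monomial,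
      weightFunctional_single_monomial, weight_add_single, mul_left_comm]
  | add p q hp hq =>
    rw [add_mul, Finsupp.single_add, map_add, hp, hq, Finsupp.single_add, map_add, mul_add]

lemma Mb_le_ker_weightFunctional (hb : CommRel χ b) :
    (Mb χ b).restrictScalars k ≤ LinearMap.ker (weightFunctional hb) := by
  rw [Mb, ← Submodule.span_smul_of_span_eq_top Submodule.span_univ, Submodule.span_le]
  rintro _ ⟨p, -, _, ⟨⟨i, σ⟩, rfl⟩, rfl⟩
  change weightFunctional hb (p • gen χ b i σ) = 0
  rw [gen, smul_sub, Finsupp.smul_single', Finsupp.smul_single', map_sub,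
    weightFunctional_single_mul_X, mul_comm p, ← smul_eq_C_mul,
    ← Finsupp.smul_single, map_smul, smul_eq_mul, sub_self]

lemma single_one_notMem_Mb (hb : CommRel χ b) (ρ : G →* kˣ) :
    Finsupp.single ρ 1 ∉ Mb χ b :=
  fun h => by
    have := Mb_le_ker_weightFunctional hb h
    rw [LinearMap.mem_ker, ← C_1, C_apply, weightFunctional_single_monomial,
      weight_zero, one_mul] at this
    exact one_ne_zero this

/-- Let `b = (b_i^ρ)` satisfy the commutation relations
`b_j^{ρρ_i} b_i^ρ = b_i^{ρρ_j} b_j^ρ`.  Then the `G*`-graded Hilbert function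
of `A/M_b` is identically one: `dim_k (A/M_b)_ρ = 1` for every `ρ ∈ G*`. -/
theorem quotient_Mb_hilbert_function_one (χ : Fin n → G →* kˣ)
    (b : Fin n → (G →* kˣ) → k)
    (hb : ∀ (i j : Fin n) (ρ : G →* kˣ), b j (ρ * χ i) * b i ρ = b i (ρ * χ j) * b j ρ)
    (ρ : G →* kˣ) :
    Module.finrank k
      ((homPiece k χ ρ).map ((Mb χ b).mkQ.restrictScalars k)) = 1 := by
  set Q := (Mb χ b).mkQ.restrictScalars k
  have himage : (homPiece k χ ρ).map Q = k ∙ Q (Finsupp.single ρ 1) := by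
    rw [homPiece, Submodule.map_span]
    apply le_antisymm
    · rw [Submodule.span_le]
      rintro _ ⟨_, ⟨u, σ, hdeg, rfl⟩, rfl⟩
      have hmonomial := mkQ_single_monomial hb u σ
      rw [show σ * degMon χ u = ρ from (mul_comm σ _).trans hdeg] at hmonomial
      exact hmonomial ▸ Submodule.smul_mem _ _ (Submodule.mem_span_singleton_self _)
    · rw [Submodule.span_singleton_le_iff_mem]
      exact Submodule.subset_span ⟨_, ⟨0, ρ, one_mul ρ, by rw [← C_1, C_apply]⟩, rfl⟩
  rw [himage, finrank_span_singleton]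
  exact mt (Submodule.Quotient.mk_eq_zero _).mp (single_one_notMem_Mb hb ρ)

end
end

section
/- Let A/M be a cyclic A-module with dim_k(A/M)_ρ = 1 for all ρ ∈ G* and e_ρ ∉ M for all ρ. Then for each i and ρ there is a unique scalar b_i^ρ ∈ k with x_i e_ρ − b_i^ρ e_{ρρ_i} ∈ M, and these scalars satisfy the commutation relations b_i^{ρρ_j} b_j^ρ = b_j^{ρρ_i} b_i^ρ for all i, j, ρ. -/
open MvPolynomial

section

variable {k : Type*} [Field k] {G : Type*} [CommGroup G] {n : ℕ}
variable [DecidableEq (G →* kˣ)]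

/-- The homogeneous component of degree `τ` of a polynomial. -/
noncomputable def homComp (χ : Fin n → G →* kˣ) (τ : G →* kˣ)
    (p : MvPolynomial (Fin n) k) : MvPolynomial (Fin n) k :=
  ∑ u ∈ p.support.filter (fun u => degMon χ u = τ), monomial u (coeff u p)

/-- Left multiplication by the idempotent `e_σ ∈ A` on `A`. -/
noncomputable def eMul (χ : Fin n → G →* kˣ) (σ : G →* kˣ) (m : Acar k G n) :
    Acar k G n :=
  ∑ ρ ∈ m.support, Finsupp.single ρ (homComp χ (σ * ρ⁻¹) (m ρ))

/-- A submodule of `A` is a left `A`-ideal iff it is an `S`-submodule stable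
under left multiplication by all the idempotents `e_σ`. -/
def IsLeftIdeal (χ : Fin n → G →* kˣ)
    (N : Submodule (MvPolynomial (Fin n) k) (Acar k G n)) : Prop :=
  ∀ (σ : G →* kˣ), ∀ m ∈ N, eMul χ σ m ∈ N

end

/-! The degree-`ρχᵢ` piece of `A/M` is one-dimensional and spanned by the nonzero class of
`e_{ρχᵢ}`, so the class of `xᵢ e_ρ` is a unique multiple `b_i^ρ` of it. Multiplying the relation
for `(i, ρ)` by `xⱼ` and the one for `(j, ρχᵢ)` by `b_i^ρ` and adding gives
`xᵢ xⱼ e_ρ ≡ b_j^{ρχᵢ} b_i^ρ e_{ρχᵢχⱼ}`; the left side is symmetric in `i, j`, so uniqueness of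
the scalar gives the commutation relation. -/

theorem Submodule.exists_smul_eq_of_finrank_map_eq_one {K V W : Type*} [DivisionRing K]
    [AddCommGroup V] [Module K V] [AddCommGroup W] [Module K W] (f : V →ₗ[K] W)
    {P : Submodule K V} (hP : Module.finrank K (P.map f) = 1) {x y : V} (hx : x ∈ P)
    (hy : y ∈ P) (hy0 : f y ≠ 0) : ∃ c : K, c • f y = f x := by
  obtain ⟨c, hc⟩ := exists_smul_eq_of_finrank_eq_one hP
    (x := ⟨f y, Submodule.mem_map_of_mem hy⟩) (Subtype.coe_ne_coe.mp hy0)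
    ⟨f x, Submodule.mem_map_of_mem hx⟩
  exact ⟨c, congrArg Subtype.val hc⟩

theorem Submodule.single_mul_sub_single_mul_mem {R ι : Type*} [CommRing R]
    (N : Submodule R (ι →₀ R)) {s t u : ι} {p q a b : R}
    (h₁ : Finsupp.single s p - Finsupp.single t a ∈ N)
    (h₂ : Finsupp.single t q - Finsupp.single u b ∈ N) :
    Finsupp.single s (p * q) - Finsupp.single u (a * b) ∈ N := by
  have h := N.add_mem (N.smul_mem q h₁) (N.smul_mem a h₂)
  simp only [smul_sub, Finsupp.smul_single, smul_eq_mul] at h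
  rwa [mul_comm q p, mul_comm q a, sub_add_sub_cancel] at h

section ConstantMultiples

variable {k σ ι : Type*} [Field k] (N : Submodule (MvPolynomial σ k) (ι →₀ MvPolynomial σ k))

theorem Submodule.eq_zero_of_single_C_mem
    (he : ∀ t : ι, Finsupp.single t (1 : MvPolynomial σ k) ∉ N) {t : ι} {c : k}
    (h : Finsupp.single t (C c) ∈ N) : c = 0 := by
  by_contra hc
  apply he t
  simpa [Finsupp.smul_single, ← C_mul, hc] using N.smul_mem (C c⁻¹) h

theorem Submodule.eq_of_sub_single_C_mem
    (he : ∀ t : ι, Finsupp.single t (1 : MvPolynomial σ k) ∉ N) {y : ι →₀ MvPolynomial σ k}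
    {t : ι} {c c' : k} (h : y - Finsupp.single t (C c) ∈ N)
    (h' : y - Finsupp.single t (C c') ∈ N) : c = c' := by
  have hsub := N.sub_mem h' h
  rw [sub_sub_sub_cancel_left, ← Finsupp.single_sub, ← C_sub] at hsub
  exact sub_eq_zero.mp (N.eq_zero_of_single_C_mem he hsub)

end ConstantMultiples

section

variable {k : Type*} [Field k] {G : Type*} [CommGroup G] {n : ℕ}

theorem degMon_single_one (χ : Fin n → G →* kˣ) (i : Fin n) :
    degMon χ (Finsupp.single i 1) = χ i := by
  rw [degMon, Finsupp.prod_single_index]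
  exacts [pow_one (χ i), pow_zero (χ i)]

theorem degMon_zero (χ : Fin n → G →* kˣ) : degMon χ 0 = 1 :=
  Finsupp.prod_zero_index

theorem single_monomial_one_mem_homPiece (χ : Fin n → G →* kˣ) {u : Fin n →₀ ℕ}
    {σ τ : G →* kˣ} (h : degMon χ u * σ = τ) :
    Finsupp.single σ (monomial u 1) ∈ homPiece k χ τ :=
  Submodule.subset_span ⟨u, σ, h, rfl⟩

theorem exists_single_X_sub_single_C_mem (χ : Fin n → G →* kˣ)
    (M : Submodule (MvPolynomial (Fin n) k) (Acar k G n))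
    (he : ∀ ρ : G →* kˣ, Finsupp.single ρ (1 : MvPolynomial (Fin n) k) ∉ M)
    (hdim : ∀ ρ : G →* kˣ,
      Module.finrank k ((homPiece k χ ρ).map (M.mkQ.restrictScalars k)) = 1)
    (i : Fin n) (ρ : G →* kˣ) :
    ∃ c : k, Finsupp.single ρ (X i) - Finsupp.single (ρ * χ i) (C c) ∈ M := by
  have hX : Finsupp.single ρ (X i) ∈ homPiece k χ (ρ * χ i) :=
    single_monomial_one_mem_homPiece χ (by rw [degMon_single_one]; exact mul_comm (χ i) ρ)
  have h1 : Finsupp.single (ρ * χ i) 1 ∈ homPiece k χ (ρ * χ i) := by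
    simpa using single_monomial_one_mem_homPiece (k := k) χ (u := 0) (σ := ρ * χ i)
      (by rw [degMon_zero]; exact one_mul (ρ * χ i))
  have h1_ne : M.mkQ.restrictScalars k (Finsupp.single (ρ * χ i) 1) ≠ 0 := by
    simpa [Submodule.Quotient.mk_eq_zero] using he (ρ * χ i)
  obtain ⟨c, hc⟩ :=
    Submodule.exists_smul_eq_of_finrank_map_eq_one _ (hdim (ρ * χ i)) hX h1 h1_ne
  refine ⟨c, ?_⟩
  rwa [← map_smul, LinearMap.restrictScalars_apply, LinearMap.restrictScalars_apply,
    Finsupp.smul_single, smul_eq_C_mul, mul_one, eq_comm, Submodule.mkQ_apply,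
    Submodule.mkQ_apply, Submodule.Quotient.eq] at hc

variable [DecidableEq (G →* kˣ)]

theorem exists_unique_b_of_cyclic_general (χ : Fin n → G →* kˣ)
    (M : Submodule (MvPolynomial (Fin n) k) (Acar k G n))
    (he : ∀ ρ : G →* kˣ, Finsupp.single ρ (1 : MvPolynomial (Fin n) k) ∉ M)
    (hdim : ∀ ρ : G →* kˣ,
      Module.finrank k ((homPiece k χ ρ).map (M.mkQ.restrictScalars k)) = 1) :
    ∃ b : Fin n → (G →* kˣ) → k,
      (∀ (i : Fin n) (ρ : G →* kˣ),
        Finsupp.single ρ (X i) - Finsupp.single (ρ * χ i) (C (b i ρ)) ∈ M) ∧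
      (∀ (i : Fin n) (ρ : G →* kˣ) (c : k),
        Finsupp.single ρ (X i) - Finsupp.single (ρ * χ i) (C c) ∈ M → c = b i ρ) ∧
      (∀ (i j : Fin n) (ρ : G →* kˣ),
        b i (ρ * χ j) * b j ρ = b j (ρ * χ i) * b i ρ) := by
  choose b hb using exists_single_X_sub_single_C_mem χ M he hdim
  refine ⟨b, hb, fun i ρ c h => M.eq_of_sub_single_C_mem he h (hb i ρ), fun i j ρ => ?_⟩
  have hij := M.single_mul_sub_single_mul_mem (hb i ρ) (hb j (ρ * χ i))
  have hji := M.single_mul_sub_single_mul_mem (hb j ρ) (hb i (ρ * χ j))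
  rw [← C_mul] at hij
  rw [← C_mul, mul_comm (X j), mul_right_comm ρ (χ j)] at hji
  rw [mul_comm (b i (ρ * χ j)), mul_comm (b j (ρ * χ i))]
  exact M.eq_of_sub_single_C_mem he hji hij

/-- Let `A/M` be a cyclic `A`-module with `dim_k (A/M)_ρ = 1` for all `ρ ∈ G*`
and `e_ρ ∉ M` for all `ρ`.  Then for each `i` and `ρ` there is a unique scalar
`b_i^ρ ∈ k` with `x_i e_ρ − b_i^ρ e_{ρρ_i} ∈ M`, and these scalars satisfy the
commutation relations `b_i^{ρρ_j} b_j^ρ = b_j^{ρρ_i} b_i^ρ`. -/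
theorem exists_unique_b_of_cyclic (χ : Fin n → G →* kˣ)
    (M : Submodule (MvPolynomial (Fin n) k) (Acar k G n))
    (hM : IsLeftIdeal χ M)
    (he : ∀ ρ : G →* kˣ, Finsupp.single ρ (1 : MvPolynomial (Fin n) k) ∉ M)
    (hdim : ∀ ρ : G →* kˣ,
      Module.finrank k ((homPiece k χ ρ).map (M.mkQ.restrictScalars k)) = 1) :
    ∃ b : Fin n → (G →* kˣ) → k,
      (∀ (i : Fin n) (ρ : G →* kˣ),
        Finsupp.single ρ (X i) - Finsupp.single (ρ * χ i) (C (b i ρ)) ∈ M) ∧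
      (∀ (i : Fin n) (ρ : G →* kˣ) (c : k),
        Finsupp.single ρ (X i) - Finsupp.single (ρ * χ i) (C c) ∈ M → c = b i ρ) ∧
      (∀ (i j : Fin n) (ρ : G →* kˣ),
        b i (ρ * χ j) * b j ρ = b j (ρ * χ i) * b i ρ) :=
  exists_unique_b_of_cyclic_general χ M he hdim

end
end

section
/- Let J = in_w(I_M) be a monomial initial ideal of the lattice ideal I_M, and let A_J ⊆ M be the semigroup generated by {u − u' ∈ M : u, u' ∈ N^n, x^u ∈ J, x^{u'} ∉ J}. Then A_J is already generated by the smaller set {u − u' ∈ M : u, u' ∈ N^n, deg(u) = deg(u'), x^u is a minimal generator of J, x^{u'} ∉ J}. -/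
/-!
Reducing a monomial `x^u ∈ J = in_w(I_M)` by a binomial `x^v - x^{v'}`, where `x^v ∣ x^u` is a
minimal generator of `J` and `x^{v'}` the standard monomial of the same degree, replaces `u` by
`u - v + v'`, of strictly smaller `w`-weight, and splits off `v - v'` from `u - u'`. Nonnegative
weights on `ℕ^n` are well-founded, so repeating this reaches a standard monomial, which is
`x^{u'}` because each degree has only one. A standard monomial exists in every degree that occurs:
a monomial of least weight in its degree is not in `in_w(I_M)`, since the part of least weight in a
fixed degree of any element of `in_w(I_M)` lies in `I_M`, which contains no monomial.
-/

open MvPolynomial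

section

variable {k : Type*} [Field k] {Γ : Type*} [CommGroup Γ] {n : ℕ}

/-- The `Γ`-degree of a monomial exponent vector: `deg(x^u) = ∏ χᵢ^{uᵢ}`. -/
def degM (χ : Fin n → Γ) (u : Fin n →₀ ℕ) : Γ := u.prod fun i e => χ i ^ e

/-- The lattice ideal `I_M = ⟨x^u − x^{u'} : u − u' ∈ M = ker(deg)⟩`. -/
noncomputable def latticeIdeal (k : Type*) [Field k] (χ : Fin n → Γ) : Ideal (MvPolynomial (Fin n) k) :=
  Ideal.span {f | ∃ u u' : Fin n →₀ ℕ, degM χ u = degM χ u' ∧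
    f = monomial u 1 - monomial u' 1}

/-- The `w`-weight of an exponent vector. -/
def wdeg (w : Fin n → ℚ) (u : Fin n →₀ ℕ) : ℚ := ∑ i ∈ u.support, w i * u i

/- The initial form of a polynomial: the sum of its terms of maximal `w`-weight. -/
open scoped Classical in
noncomputable def inW (w : Fin n → ℚ) (f : MvPolynomial (Fin n) k) :
    MvPolynomial (Fin n) k :=
  if h : f = 0 then 0 else
    ∑ u ∈ f.support.filter
        (fun u => wdeg w u = f.support.sup' (by simpa using h) (wdeg w)),
      monomial u (coeff u f)

/-- The initial ideal `in_w(I)`. -/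
noncomputable def initialIdeal (w : Fin n → ℚ) (I : Ideal (MvPolynomial (Fin n) k)) :
    Ideal (MvPolynomial (Fin n) k) :=
  Ideal.span {g | ∃ f ∈ I, g = inW w f}

/-- `J` is a monomial ideal. -/
def IsMonomialIdeal (J : Ideal (MvPolynomial (Fin n) k)) : Prop :=
  ∀ f ∈ J, ∀ u ∈ f.support, (monomial u 1 : MvPolynomial (Fin n) k) ∈ J

/-- `x^u` is a minimal generator of the monomial ideal `J`. -/
def IsMinimalGenerator (J : Ideal (MvPolynomial (Fin n) k)) (u : Fin n →₀ ℕ) : Prop :=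
  (monomial u 1 : MvPolynomial (Fin n) k) ∈ J ∧
    ∀ u' : Fin n →₀ ℕ, u' ≤ u → u' ≠ u → (monomial u' 1 : MvPolynomial (Fin n) k) ∉ J

namespace MvPolynomial

variable {σ R M : Type*} [CommSemiring R]

theorem weightedHomogeneousComponent_monomial_mul [AddCancelCommMonoid M] (W : σ → M)
    (c : σ →₀ ℕ) (a : R) (m : M) (p : MvPolynomial σ R) :
    weightedHomogeneousComponent W (Finsupp.weight W c + m) (monomial c a * p) =
      monomial c a * weightedHomogeneousComponent W m p := by
  classical
  ext d
  rw [coeff_weightedHomogeneousComponent, coeff_monomial_mul', coeff_monomial_mul']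
  by_cases hcd : c ≤ d
  · have hd : Finsupp.weight W d = Finsupp.weight W c + Finsupp.weight W (d - c) := by
      rw [← map_add, add_tsub_cancel_of_le hcd]
    simp only [if_pos hcd, coeff_weightedHomogeneousComponent, hd, add_right_inj]
    split_ifs <;> simp
  · simp [hcd]

theorem weightedHomogeneousComponent_comm [AddCommMonoid M] {N : Type*} [AddCommMonoid N]
    (V : σ → M) (W : σ → N) (m : M) (e : N) (p : MvPolynomial σ R) :
    weightedHomogeneousComponent V m (weightedHomogeneousComponent W e p) =
      weightedHomogeneousComponent W e (weightedHomogeneousComponent V m p) := by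
  classical
  ext d
  simp only [coeff_weightedHomogeneousComponent]
  split_ifs <;> rfl

theorem span_induction_monomial_mul {S : Set (MvPolynomial σ R)}
    {P : ∀ f, f ∈ Ideal.span S → Prop}
    (mem : ∀ s (hs : s ∈ S), P s (Ideal.subset_span hs))
    (zero : P 0 (zero_mem _))
    (add : ∀ f g hf hg, P f hf → P g hg → P (f + g) (add_mem hf hg))
    (monomial_mul : ∀ c a f hf, P f hf → P (monomial c a * f) (Ideal.mul_mem_left _ _ hf))
    {f : MvPolynomial σ R} (hf : f ∈ Ideal.span S) : P f hf := by
  induction hf using Submodule.span_induction with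
  | mem s hs => exact mem s hs
  | zero => exact zero
  | add f g _ _ hf hg => exact add f g _ _ hf hg
  | smul a f _ hf =>
    have key : ∃ h, P (a * f) h := by
      rw [as_sum a, Finset.sum_mul]
      exact Finset.sum_induction _ (fun x => ∃ h, P x h)
        (fun _ _ ⟨_, hx⟩ ⟨_, hy⟩ => ⟨_, add _ _ _ _ hx hy⟩) ⟨_, zero⟩
        fun c _ => ⟨_, monomial_mul _ _ _ _ hf⟩
    exact key.2

end MvPolynomial

namespace Finsupp

variable {σ M : Type*} [AddCommMonoid M] [LinearOrder M] [IsOrderedAddMonoid M]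

theorem weight_mono {w : σ → M} (hw : ∀ i, 0 ≤ w i) :
    Monotone (weight w : (σ →₀ ℕ) → M) := by
  intro a b hab
  rw [← add_tsub_cancel_of_le hab, map_add]
  exact le_add_of_nonneg_right (sum_nonneg fun i _ => nsmul_nonneg (hw i) _)

/-- Dickson's lemma: a descending chain of weights would contain a pair `a ≤ b`. -/
theorem wellFounded_weight_lt [Finite σ] {w : σ → M} (hw : ∀ i, 0 ≤ w i) :
    WellFounded fun a b : σ →₀ ℕ => weight w a < weight w b := by
  rw [← Set.wellFoundedOn_univ, ← Set.wellFoundedOn_image]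
  exact ((Set.isPWO_of_wellQuasiOrderedLE _).image_of_monotone (weight_mono hw)).isWF

end Finsupp

open Finsupp

theorem exists_isMinimalGenerator_le {J : Ideal (MvPolynomial (Fin n) k)} {u : Fin n →₀ ℕ}
    (hu : (monomial u 1 : MvPolynomial (Fin n) k) ∈ J) :
    ∃ v ≤ u, IsMinimalGenerator J v := by
  obtain ⟨v, ⟨hvu, hvJ⟩, hmin⟩ := wellFounded_lt.has_min
    {v | v ≤ u ∧ (monomial v 1 : MvPolynomial (Fin n) k) ∈ J} ⟨u, le_rfl, hu⟩
  exact ⟨v, hvu, hvJ, fun v' hle hne hv' =>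
    hmin v' ⟨hle.trans hvu, hv'⟩ (lt_of_le_of_ne hle hne)⟩

theorem degM_add (χ : Fin n → Γ) (a b : Fin n →₀ ℕ) :
    degM χ (a + b) = degM χ a * degM χ b :=
  prod_add_index' (fun _ => pow_zero _) fun _ _ _ => pow_add _ _ _

theorem weight_ofMul_comp (χ : Fin n → Γ) (u : Fin n →₀ ℕ) :
    weight (Additive.ofMul ∘ χ) u = Additive.ofMul (degM χ u) := by
  simp [weight_apply, degM, Finsupp.prod, Finsupp.sum, ofMul_prod, ofMul_pow]

theorem wdeg_eq_weight (w : Fin n → ℚ) : wdeg w = weight w := by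
  ext u
  simp [wdeg, weight_apply, Finsupp.sum, mul_comm]

theorem inW_eq_weightedHomogeneousComponent (w : Fin n → ℚ) {f : MvPolynomial (Fin n) k}
    (hf : f ≠ 0) :
    inW w f =
      weightedHomogeneousComponent w (f.support.sup' (support_nonempty.2 hf) (weight w)) f := by
  classical
  rw [inW, dif_neg hf, weightedHomogeneousComponent_apply]
  simp only [wdeg_eq_weight]

theorem monomial_notMem_latticeIdeal (χ : Fin n → Γ) (u : Fin n →₀ ℕ) :
    (monomial u 1 : MvPolynomial (Fin n) k) ∉ latticeIdeal k χ := by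
  have hle : latticeIdeal k χ ≤ RingHom.ker (eval fun _ => (1 : k)) := by
    refine Ideal.span_le.2 ?_
    rintro _ ⟨u, u', -, rfl⟩
    simp [eval_monomial]
  intro hu
  simpa [eval_monomial] using hle hu

theorem weightedHomogeneousComponent_mem_latticeIdeal (χ : Fin n → Γ)
    {f : MvPolynomial (Fin n) k} (hf : f ∈ latticeIdeal k χ) (δ : Additive Γ) :
    weightedHomogeneousComponent (Additive.ofMul ∘ χ) δ f ∈ latticeIdeal k χ := by
  classical
  let := weightedGradedAlgebra k (Additive.ofMul ∘ χ)
  refine weightedHomogeneousComponent_mem_of_mem k _ (Ideal.homogeneous_span _ _ ?_) hf δ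
  rintro _ ⟨u, u', hdeg, rfl⟩
  refine ⟨Additive.ofMul (degM χ u), ?_⟩
  exact (isWeightedHomogeneous_monomial _ _ _ (weight_ofMul_comp χ u)).sub
    (isWeightedHomogeneous_monomial _ _ _ (by rw [weight_ofMul_comp, hdeg]))

/-- For `h = in_w f` this component is the degree-`δ` part of `f` or zero; multiplying `h` by a
monomial shifts both gradings. -/
theorem weightedHomogeneousComponent_mem_latticeIdeal_of_mem_initialIdeal {χ : Fin n → Γ}
    {w : Fin n → ℚ} {h : MvPolynomial (Fin n) k} (hh : h ∈ initialIdeal w (latticeIdeal k χ))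
    (δ : Additive Γ) (e : ℚ)
    (he : ∀ z : Fin n →₀ ℕ, weight (Additive.ofMul ∘ χ) z = δ → e ≤ weight w z) :
    weightedHomogeneousComponent w e (weightedHomogeneousComponent (Additive.ofMul ∘ χ) δ h) ∈
      latticeIdeal k χ := by
  induction hh using span_induction_monomial_mul generalizing δ e with
  | mem _ hf =>
    obtain ⟨f, hf, rfl⟩ := hf
    rcases eq_or_ne f 0 with rfl | hf0
    · simp [inW]
    rw [inW_eq_weightedHomogeneousComponent w hf0,
      weightedHomogeneousComponent_comm (Additive.ofMul ∘ χ) w δ]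
    set m := f.support.sup' (support_nonempty.2 hf0) (weight w)
    set g := weightedHomogeneousComponent (Additive.ofMul ∘ χ) δ f
    by_cases hem : e = m
    · have hg : g.IsWeightedHomogeneous w m := by
        classical
        intro d hd
        rw [coeff_weightedHomogeneousComponent, ite_ne_right_iff] at hd
        exact le_antisymm (Finset.le_sup' _ (MvPolynomial.mem_support_iff.2 hd.2))
          (hem ▸ he d hd.1)
      rw [hem, hg.weightedHomogeneousComponent_same, hg.weightedHomogeneousComponent_same]
      exact weightedHomogeneousComponent_mem_latticeIdeal χ hf δ
    · rw [(weightedHomogeneousComponent_isWeightedHomogeneous m g).weightedHomogeneousComponent_ne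
        e hem]
      exact zero_mem _
  | zero => simp
  | add f g _ _ hf hg => simpa using add_mem (hf δ e he) (hg δ e he)
  | monomial_mul c a f _ hf =>
    rw [← add_sub_cancel (weight (Additive.ofMul ∘ χ) c) δ, ← add_sub_cancel (weight w c) e,
      weightedHomogeneousComponent_monomial_mul, weightedHomogeneousComponent_monomial_mul]
    refine Ideal.mul_mem_left _ _ (hf _ _ fun z hz => ?_)
    have := he (c + z) (by rw [map_add, hz, add_sub_cancel])
    rw [map_add] at this
    linarith

section InitialIdeal

variable {χ : Fin n → Γ} {w : Fin n → ℚ}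

theorem monomial_notMem_initialIdeal_of_weight_le {u₀ : Fin n →₀ ℕ}
    (hmin : ∀ z, degM χ z = degM χ u₀ → weight w u₀ ≤ weight w z) :
    (monomial u₀ 1 : MvPolynomial (Fin n) k) ∉ initialIdeal w (latticeIdeal k χ) := by
  intro hu₀
  have := weightedHomogeneousComponent_mem_latticeIdeal_of_mem_initialIdeal hu₀
    (weight (Additive.ofMul ∘ χ) u₀) (weight w u₀) fun z hz =>
      hmin z (Additive.ofMul.injective (by rwa [← weight_ofMul_comp, ← weight_ofMul_comp]))
  rw [weightedHomogeneousComponent_eq_self (isWeightedHomogeneous_monomial _ _ _ rfl),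
    weightedHomogeneousComponent_eq_self (isWeightedHomogeneous_monomial _ _ _ rfl)] at this
  exact monomial_notMem_latticeIdeal χ u₀ this

theorem exists_degM_eq_monomial_notMem_initialIdeal (hw : ∀ i, 0 ≤ w i) (v : Fin n →₀ ℕ) :
    ∃ v', degM χ v' = degM χ v ∧
      (monomial v' 1 : MvPolynomial (Fin n) k) ∉ initialIdeal w (latticeIdeal k χ) := by
  obtain ⟨v', hv', hmin⟩ :=
    (wellFounded_weight_lt hw).has_min {z | degM χ z = degM χ v} ⟨v, rfl⟩
  exact ⟨v', hv', monomial_notMem_initialIdeal_of_weight_le fun z hz =>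
    not_lt.1 (hmin z (hz.trans hv'))⟩

theorem monomial_mem_initialIdeal_of_mem_support {I : Ideal (MvPolynomial (Fin n) k)}
    (hmono : IsMonomialIdeal (initialIdeal w I)) {f : MvPolynomial (Fin n) k} (hf : f ∈ I)
    {z : Fin n →₀ ℕ} (hz : z ∈ f.support)
    (hmax : ∀ y ∈ f.support, weight w y ≤ weight w z) :
    (monomial z 1 : MvPolynomial (Fin n) k) ∈ initialIdeal w I := by
  classical
  have hf0 : f ≠ 0 := ne_zero_iff.2 ⟨z, MvPolynomial.mem_support_iff.1 hz⟩
  refine hmono _ (Ideal.subset_span ⟨f, hf, rfl⟩) z ?_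
  rw [inW_eq_weightedHomogeneousComponent w hf0, support_weightedHomogeneousComponent]
  exact Finset.mem_filter.2 ⟨hz, le_antisymm (Finset.le_sup' _ hz) (Finset.sup'_le _ _ hmax)⟩

theorem monomial_mem_initialIdeal_of_weight_le
    (hmono : IsMonomialIdeal (initialIdeal w (latticeIdeal k χ))) {u u' : Fin n →₀ ℕ}
    (hdeg : degM χ u = degM χ u') (hne : u ≠ u') (hle : weight w u ≤ weight w u') :
    (monomial u' 1 : MvPolynomial (Fin n) k) ∈ initialIdeal w (latticeIdeal k χ) := by
  classical
  refine monomial_mem_initialIdeal_of_mem_support hmono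
    (Ideal.subset_span ⟨u', u, hdeg.symm, rfl⟩) ?_ fun y hy => ?_
  · simp [coeff_monomial, hne]
  · rcases Finset.mem_union.1 (support_sub _ _ _ hy) with hy | hy <;>
      obtain rfl := Finset.mem_singleton.1 (support_monomial_subset hy)
    · exact le_rfl
    · exact hle

theorem weight_lt_of_monomial_mem_of_notMem
    (hmono : IsMonomialIdeal (initialIdeal w (latticeIdeal k χ))) {u u' : Fin n →₀ ℕ}
    (hdeg : degM χ u = degM χ u')
    (hu : (monomial u 1 : MvPolynomial (Fin n) k) ∈ initialIdeal w (latticeIdeal k χ))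
    (hu' : (monomial u' 1 : MvPolynomial (Fin n) k) ∉ initialIdeal w (latticeIdeal k χ)) :
    weight w u' < weight w u :=
  lt_of_not_ge fun hle =>
    hu' (monomial_mem_initialIdeal_of_weight_le hmono hdeg (by rintro rfl; exact hu' hu) hle)

theorem eq_of_monomial_notMem_initialIdeal
    (hmono : IsMonomialIdeal (initialIdeal w (latticeIdeal k χ))) {u u' : Fin n →₀ ℕ}
    (hdeg : degM χ u = degM χ u')
    (hu : (monomial u 1 : MvPolynomial (Fin n) k) ∉ initialIdeal w (latticeIdeal k χ))
    (hu' : (monomial u' 1 : MvPolynomial (Fin n) k) ∉ initialIdeal w (latticeIdeal k χ)) :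
    u = u' := by
  by_contra hne
  rcases le_total (weight w u) (weight w u') with hle | hle
  · exact hu' (monomial_mem_initialIdeal_of_weight_le hmono hdeg hne hle)
  · exact hu (monomial_mem_initialIdeal_of_weight_le hmono hdeg.symm (Ne.symm hne) hle)

end InitialIdeal

def minimalGeneratorDifferences (χ : Fin n → Γ) (J : Ideal (MvPolynomial (Fin n) k)) :
    Set (Fin n → ℤ) :=
  {d | ∃ u u' : Fin n →₀ ℕ, degM χ u = degM χ u' ∧ IsMinimalGenerator J u ∧
    (monomial u' 1 : MvPolynomial (Fin n) k) ∉ J ∧ d = fun i => (u i : ℤ) - (u' i : ℤ)}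

theorem sub_mem_closure_minimalGeneratorDifferences {χ : Fin n → Γ} {w : Fin n → ℚ}
    (hw : ∀ i, 0 ≤ w i) (hmono : IsMonomialIdeal (initialIdeal w (latticeIdeal k χ)))
    {u u' : Fin n →₀ ℕ} (hdeg : degM χ u = degM χ u')
    (hu : (monomial u 1 : MvPolynomial (Fin n) k) ∈ initialIdeal w (latticeIdeal k χ))
    (hu' : (monomial u' 1 : MvPolynomial (Fin n) k) ∉ initialIdeal w (latticeIdeal k χ)) :
    (fun i => (u i : ℤ) - (u' i : ℤ)) ∈
      AddSubmonoid.closure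
        (minimalGeneratorDifferences χ (initialIdeal w (latticeIdeal k χ))) := by
  induction u using (wellFounded_weight_lt hw).induction with
  | _ u ih =>
  obtain ⟨v, hvu, hv⟩ := exists_isMinimalGenerator_le hu
  obtain ⟨t, rfl⟩ := exists_add_of_le hvu
  obtain ⟨v', hv'deg, hv'⟩ :=
    exists_degM_eq_monomial_notMem_initialIdeal (k := k) (χ := χ) hw v
  have hdeg₂ : degM χ (v' + t) = degM χ u' := by rw [← hdeg, degM_add, degM_add, hv'deg]
  have hsplit : (fun i => ((v + t) i : ℤ) - (u' i : ℤ)) =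
      (fun i => (v i : ℤ) - (v' i : ℤ)) + fun i => ((v' + t) i : ℤ) - (u' i : ℤ) := by
    funext i
    simp only [Finsupp.add_apply, Pi.add_apply, Nat.cast_add]
    ring
  rw [hsplit]
  refine add_mem (AddSubmonoid.subset_closure ⟨v, v', hv'deg.symm, hv, hv', rfl⟩) ?_
  by_cases hu₂ : (monomial (v' + t) 1 : MvPolynomial (Fin n) k) ∈
      initialIdeal w (latticeIdeal k χ)
  · refine ih _ ?_ hdeg₂ hu₂
    rw [map_add, map_add]
    exact add_lt_add_left (weight_lt_of_monomial_mem_of_notMem hmono hv'deg.symm hv.1 hv') _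
  · rw [eq_of_monomial_notMem_initialIdeal hmono hdeg₂ hu₂ hu']
    simp only [sub_self, ← Pi.zero_def, zero_mem]

theorem semigroup_AJ_generated_by_minimal_generators_general (χ : Fin n → Γ)
    (w : Fin n → ℚ) (hw : ∀ i, 0 ≤ w i)
    (J : Ideal (MvPolynomial (Fin n) k)) (hJ : J = initialIdeal w (latticeIdeal k χ))
    (hmono : IsMonomialIdeal J) :
    AddSubmonoid.closure
      {d : Fin n → ℤ | ∃ u u' : Fin n →₀ ℕ, degM χ u = degM χ u' ∧
        (monomial u 1 : MvPolynomial (Fin n) k) ∈ J ∧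
        (monomial u' 1 : MvPolynomial (Fin n) k) ∉ J ∧
        d = fun i => (u i : ℤ) - (u' i : ℤ)} =
    AddSubmonoid.closure
      {d : Fin n → ℤ | ∃ u u' : Fin n →₀ ℕ, degM χ u = degM χ u' ∧
        IsMinimalGenerator J u ∧
        (monomial u' 1 : MvPolynomial (Fin n) k) ∉ J ∧
        d = fun i => (u i : ℤ) - (u' i : ℤ)} := by
  subst hJ
  refine le_antisymm (AddSubmonoid.closure_le.2 ?_) (AddSubmonoid.closure_mono ?_)
  · rintro _ ⟨u, u', hdeg, hu, hu', rfl⟩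
    exact sub_mem_closure_minimalGeneratorDifferences hw hmono hdeg hu hu'
  · rintro _ ⟨u, u', hdeg, hu, hu', rfl⟩
    exact ⟨u, u', hdeg, hu.1, hu', rfl⟩

/-- Let `J = in_w(I_M)` be a monomial initial ideal of the lattice ideal `I_M`.
The semigroup `A_J` generated by `{u − u' ∈ M : x^u ∈ J, x^{u'} ∉ J}` is
already generated by the differences `u − u'` in which `x^u` is a minimal
generator of `J`. -/
theorem semigroup_AJ_generated_by_minimal_generators (χ : Fin n → Γ)
    (hgen : ∀ γ : Γ, ∃ u : Fin n →₀ ℕ, degM χ u = γ)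
    (w : Fin n → ℚ) (hw : ∀ i, 0 ≤ w i)
    (J : Ideal (MvPolynomial (Fin n) k)) (hJ : J = initialIdeal w (latticeIdeal k χ))
    (hmono : IsMonomialIdeal J) :
    AddSubmonoid.closure
      {d : Fin n → ℤ | ∃ u u' : Fin n →₀ ℕ, degM χ u = degM χ u' ∧
        (monomial u 1 : MvPolynomial (Fin n) k) ∈ J ∧
        (monomial u' 1 : MvPolynomial (Fin n) k) ∉ J ∧
        d = fun i => (u i : ℤ) - (u' i : ℤ)} =
    AddSubmonoid.closure
      {d : Fin n → ℤ | ∃ u u' : Fin n →₀ ℕ, degM χ u = degM χ u' ∧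
        IsMinimalGenerator J u ∧
        (monomial u' 1 : MvPolynomial (Fin n) k) ∉ J ∧
        d = fun i => (u i : ℤ) - (u' i : ℤ)} :=
  semigroup_AJ_generated_by_minimal_generators_general χ w hw J hJ hmono

end
end

section
/- Let I_M ⊆ k[x_1,...,x_n] be the lattice ideal of a sublattice M ⊆ Z^n, and let L ⊆ M be a generating set for the lattice M. Then I_M equals the saturation (⟨x^{pos(u)} − x^{neg(u)} : u ∈ L⟩ : (x_1⋯x_n)^∞). -/
open MvPolynomial

section

variable {k : Type*} [Field k] {n : ℕ}

/-- The monomial `x^{pos(u)}` associated to the positive part of `u : ℤⁿ`. -/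
noncomputable def monPos (k : Type*) [Field k] (u : Fin n → ℤ) : MvPolynomial (Fin n) k :=
  ∏ i : Fin n, X i ^ (u i).toNat

/-- The monomial `x^{neg(u)}` associated to the negative part of `u : ℤⁿ`. -/
noncomputable def monNeg (k : Type*) [Field k] (u : Fin n → ℤ) : MvPolynomial (Fin n) k :=
  ∏ i : Fin n, X i ^ (-u i).toNat

/-- The lattice ideal `I_M = ⟨x^a − x^b : a, b ∈ ℕⁿ, a − b ∈ M⟩` of a sublattice
`M ⊆ ℤⁿ`. -/
noncomputable def latticeIdealOf (k : Type*) [Field k] (M : AddSubgroup (Fin n → ℤ)) :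
    Ideal (MvPolynomial (Fin n) k) :=
  Ideal.span {f | ∃ a b : Fin n → ℕ, (fun i => (a i : ℤ) - (b i : ℤ)) ∈ M ∧
    f = (∏ i : Fin n, X i ^ a i) - ∏ i : Fin n, X i ^ b i}

/-! `I_M` is the kernel of `k[x] → k[ℤⁿ ⧸ M]`, `x^a ↦ [a]`, in which the `xᵢ` become units; so `I_M`
is saturated with respect to `x₁⋯xₙ`, and since it contains the binomials `b(u) = x^{u⁺} - x^{u⁻}`
of `u ∈ L`, it contains their saturation. Conversely, the `u` with `b(u)` in the saturation form a
subgroup, by the identity `x^{u⁻} x^{v⁻} b(u + v) = x^{(u+v)⁻} (x^{v⁺} b(u) + x^{u⁻} b(v))` and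
because monomial factors can be cancelled in a saturation; so it contains `M`, and each generator
`x^a - x^b` of `I_M` is a monomial times `b(a - b)`. -/

namespace AddMonoidAlgebra

theorem ker_mapDomainRingHom {R M N : Type*} [Ring R] [AddMonoid M] [AddMonoid N] (f : M →+ N) :
    RingHom.ker (mapDomainRingHom R f) =
      Ideal.span {x | ∃ a b, f a = f b ∧ x = single a 1 - single b 1} := by
  refine le_antisymm (fun x hx => ?_) (Ideal.span_le.mpr ?_)
  · -- `s` picks a representative of each fibre of `f`; as `x` sums to zero over every fibre,
    -- `x = ∑ xₐ (eₐ - e_{s a})`.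
    let s := Function.invFun f ∘ f
    have hs : ∀ a, f (s a) = f a := fun a => Function.invFun_eq ⟨a, rfl⟩
    have hxs : mapDomain s x = 0 := by
      have : mapDomain s x = mapDomain (Function.invFun f) (mapDomainRingHom R f x) := by
        ext; simp [s, Finsupp.mapDomain_comp]
      rw [this, hx, mapDomain_zero]
    have hsum : x = x.coeff.sum fun a c => single 0 c * (single a 1 - single (s a) 1) := by
      conv_lhs => rw [← sub_zero x, ← hxs, ← sum_coeff_single x, mapDomain_sum]
      simp only [mapDomain_single, single_mul_single, mul_sub, zero_add, mul_one,
        ← Finsupp.sum_sub]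
    rw [hsum]
    exact Ideal.sum_mem _ fun a _ =>
      Ideal.mul_mem_left _ _ (Ideal.subset_span ⟨a, s a, (hs a).symm, rfl⟩)
  · rintro _ ⟨a, b, hab, rfl⟩
    rw [SetLike.mem_coe, RingHom.mem_ker, map_sub, mapDomainRingHom_apply, mapDomainRingHom_apply,
      mapDomain_single, mapDomain_single, hab, sub_self]

theorem isUnit_single_one {R G : Type*} [Semiring R] [AddGroup G] (g : G) :
    IsUnit (single g (1 : R)) := by
  simpa [of_apply] using (Group.isUnit (Multiplicative.ofAdd g)).map (of R G)

end AddMonoidAlgebra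

namespace Ideal

variable {R : Type*} [CommSemiring R]

def saturation (J : Ideal R) (f : R) : Ideal R where
  carrier := {g | ∃ m : ℕ, f ^ m * g ∈ J}
  zero_mem' := ⟨0, by simp⟩
  add_mem' := by
    rintro a b ⟨m, ha⟩ ⟨m', hb⟩
    refine ⟨m + m', ?_⟩
    have : f ^ (m + m') * (a + b) = f ^ m' * (f ^ m * a) + f ^ m * (f ^ m' * b) := by ring
    rw [this]
    exact J.add_mem (J.mul_mem_left _ ha) (J.mul_mem_left _ hb)
  smul_mem' := by
    rintro c a ⟨m, ha⟩
    refine ⟨m, ?_⟩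
    rw [smul_eq_mul, mul_left_comm]
    exact J.mul_mem_left c ha

variable {J : Ideal R} {f : R}

theorem mem_saturation {g : R} : g ∈ J.saturation f ↔ ∃ m : ℕ, f ^ m * g ∈ J := Iff.rfl

theorem le_saturation : J ≤ J.saturation f := fun g hg => ⟨0, by rwa [pow_zero, one_mul]⟩

theorem mem_saturation_of_dvd_of_mul_mem {c g : R} {N : ℕ} (hc : c ∣ f ^ N)
    (h : c * g ∈ J.saturation f) : g ∈ J.saturation f := by
  obtain ⟨m, hm⟩ := h
  obtain ⟨d, hd⟩ := hc
  refine ⟨m + N, ?_⟩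
  have : f ^ (m + N) * g = d * (f ^ m * (c * g)) := by rw [pow_add, hd]; ring
  rw [this]
  exact J.mul_mem_left d hm

end Ideal

theorem RingHom.mem_ker_of_isUnit_of_mul_mem_ker {R S : Type*} [Semiring R] [Semiring S]
    (ψ : R →+* S) {a b : R} (ha : IsUnit (ψ a)) (h : a * b ∈ RingHom.ker ψ) :
    b ∈ RingHom.ker ψ := by
  rwa [RingHom.mem_ker, map_mul, ha.mul_right_eq_zero] at h

namespace MvPolynomial

theorem monomial_one_eq_prod_X_pow {σ R : Type*} [CommSemiring R] [Fintype σ] (d : σ →₀ ℕ) :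
    monomial d (1 : R) = ∏ i, X i ^ d i := by
  rw [monomial_eq, C_1, one_mul, Finsupp.prod_fintype _ _ fun _ => pow_zero _]

theorem prod_X_pow_mul_prod_X_pow {σ R : Type*} [CommSemiring R] [Fintype σ] (a b : σ → ℕ) :
    (∏ i, (X i : MvPolynomial σ R) ^ a i) * ∏ i, X i ^ b i = ∏ i, X i ^ (a i + b i) := by
  simp only [← Finset.prod_mul_distrib, pow_add]

theorem exists_prod_X_pow_dvd_pow_prod_X {σ R : Type*} [CommSemiring R] [Fintype σ] (c : σ → ℕ) :
    ∃ N, ∏ i, (X i : MvPolynomial σ R) ^ c i ∣ (∏ i, X i) ^ N := by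
  refine ⟨∑ i, c i, ?_⟩
  rw [← Finset.prod_pow]
  exact Finset.prod_dvd_prod_of_dvd _ _ fun i _ =>
    pow_dvd_pow _ (Finset.single_le_sum (fun j _ => Nat.zero_le (c j)) (Finset.mem_univ i))

end MvPolynomial

section LatticeIdeal

variable (M : AddSubgroup (Fin n → ℤ))

noncomputable def exponentClass : (Fin n →₀ ℕ) →+ (Fin n → ℤ) ⧸ M :=
  (QuotientAddGroup.mk' M).comp
    (Finsupp.coeFnAddHom.comp (Finsupp.mapRange.addMonoidHom (Nat.castAddMonoidHom ℤ)))

theorem exponentClass_eq_iff (d e : Fin n →₀ ℕ) :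
    exponentClass M d = exponentClass M e ↔ (fun i => (d i : ℤ) - e i) ∈ M := by
  simp only [exponentClass, AddMonoidHom.comp_apply, QuotientAddGroup.mk'_apply,
    QuotientAddGroup.eq_iff_sub_mem]
  rfl

noncomputable def toGroupAlgebra :
    MvPolynomial (Fin n) k →+* AddMonoidAlgebra k ((Fin n → ℤ) ⧸ M) :=
  AddMonoidAlgebra.mapDomainRingHom k (exponentClass M)

theorem latticeIdealOf_eq_ker : latticeIdealOf k M = RingHom.ker (toGroupAlgebra M) := by
  rw [latticeIdealOf, toGroupAlgebra, AddMonoidAlgebra.ker_mapDomainRingHom]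
  congr 1
  ext f
  simp only [single_eq_monomial, monomial_one_eq_prod_X_pow, exponentClass_eq_iff]
  constructor
  · rintro ⟨a, b, hab, rfl⟩
    exact ⟨Finsupp.equivFunOnFinite.symm a, Finsupp.equivFunOnFinite.symm b, by simpa, by simp⟩
  · rintro ⟨d, e, hde, rfl⟩
    exact ⟨d, e, hde, rfl⟩

theorem isUnit_toGroupAlgebra_prod_X :
    IsUnit (toGroupAlgebra M (∏ i, X i : MvPolynomial (Fin n) k)) := by
  rw [map_prod, IsUnit.prod_univ_iff]
  intro i
  rw [X, toGroupAlgebra, AddMonoidAlgebra.mapDomainRingHom_apply, monomial,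
    AddMonoidAlgebra.lsingle_apply, AddMonoidAlgebra.mapDomain_single]
  exact AddMonoidAlgebra.isUnit_single_one _

theorem mem_latticeIdealOf_of_pow_mul_mem {g : MvPolynomial (Fin n) k} {m : ℕ}
    (h : (∏ i, X i) ^ m * g ∈ latticeIdealOf k M) : g ∈ latticeIdealOf k M := by
  rw [latticeIdealOf_eq_ker] at h ⊢
  exact (toGroupAlgebra M).mem_ker_of_isUnit_of_mul_mem_ker
    (by rw [map_pow]; exact (isUnit_toGroupAlgebra_prod_X M).pow m) h

end LatticeIdeal

section Binomial

noncomputable abbrev binomial (k : Type*) [Field k] (u : Fin n → ℤ) : MvPolynomial (Fin n) k :=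
  monPos k u - monNeg k u

theorem binomial_zero : binomial k (0 : Fin n → ℤ) = 0 := by
  simp [binomial, monPos, monNeg]

theorem binomial_neg (u : Fin n → ℤ) : binomial k (-u) = -binomial k u := by
  simp [binomial, monPos, monNeg]

theorem monNeg_mul_monNeg_mul_binomial_add (u v : Fin n → ℤ) :
    monNeg k u * monNeg k v * binomial k (u + v) =
      monNeg k (u + v) * (monPos k v * binomial k u + monNeg k u * binomial k v) := by
  have key : monNeg k u * monNeg k v * monPos k (u + v) =
      monNeg k (u + v) * (monPos k u * monPos k v) := by
    simp only [monPos, monNeg, prod_X_pow_mul_prod_X_pow]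
    refine Finset.prod_congr rfl fun i _ => ?_
    simp only [Pi.add_apply]
    congr 1
    omega
  linear_combination key

theorem binomial_mem_saturation_of_mem_closure {J : Ideal (MvPolynomial (Fin n) k)}
    {L : Set (Fin n → ℤ)} (hL : ∀ u ∈ L, binomial k u ∈ J.saturation (∏ i, X i))
    {u : Fin n → ℤ} (hu : u ∈ AddSubgroup.closure L) :
    binomial k u ∈ J.saturation (∏ i, X i) := by
  induction hu using AddSubgroup.closure_induction with
  | mem u hu => exact hL u hu
  | zero => rw [binomial_zero]; exact zero_mem _
  | add u v _ _ hu hv =>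
    obtain ⟨N, hN⟩ : ∃ N, monNeg k u * monNeg k v ∣ (∏ i, X i) ^ N := by
      rw [monNeg, monNeg, prod_X_pow_mul_prod_X_pow]
      exact exists_prod_X_pow_dvd_pow_prod_X _
    refine Ideal.mem_saturation_of_dvd_of_mul_mem hN ?_
    rw [monNeg_mul_monNeg_mul_binomial_add]
    exact Ideal.mul_mem_left _ _ (add_mem (Ideal.mul_mem_left _ _ hu) (Ideal.mul_mem_left _ _ hv))
  | neg u _ hu => rw [binomial_neg]; exact neg_mem hu

theorem prod_X_pow_sub_prod_X_pow_eq_mul_binomial (a b : Fin n → ℕ) :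
    (∏ i, (X i : MvPolynomial (Fin n) k) ^ a i) - ∏ i, X i ^ b i =
      (∏ i, X i ^ min (a i) (b i)) * binomial k (fun i => (a i : ℤ) - b i) := by
  rw [binomial, mul_sub, monPos, monNeg, prod_X_pow_mul_prod_X_pow, prod_X_pow_mul_prod_X_pow]
  congr 1 <;> refine Finset.prod_congr rfl fun i _ => ?_ <;> congr 1 <;> omega

variable (M : AddSubgroup (Fin n → ℤ)) {L : Set (Fin n → ℤ)}

theorem latticeIdealOf_le_saturation (hL : AddSubgroup.closure L = M) :
    latticeIdealOf k M ≤
      (Ideal.span {f | ∃ u ∈ L, f = binomial k u}).saturation (∏ i, X i) := by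
  refine Ideal.span_le.mpr ?_
  rintro _ ⟨a, b, hab, rfl⟩
  rw [SetLike.mem_coe, prod_X_pow_sub_prod_X_pow_eq_mul_binomial]
  refine Ideal.mul_mem_left _ _ (binomial_mem_saturation_of_mem_closure ?_ (hL ▸ hab))
  exact fun u hu => Ideal.le_saturation (Ideal.subset_span ⟨u, hu, rfl⟩)

theorem span_binomial_le_latticeIdealOf (hL : L ⊆ M) :
    Ideal.span {f | ∃ u ∈ L, f = binomial k u} ≤ latticeIdealOf k M := by
  refine Ideal.span_le.mpr ?_
  rintro _ ⟨u, hu, rfl⟩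
  refine Ideal.subset_span ⟨fun i => (u i).toNat, fun i => (-u i).toNat, ?_, rfl⟩
  have hsplit : (fun i => ((u i).toNat : ℤ) - (-u i).toNat) = u := funext fun i => by omega
  rw [hsplit]
  exact hL hu

end Binomial

/-- Hoşten–Sturmfels: if `L` generates the lattice `M ⊆ ℤⁿ`, then the lattice
ideal `I_M` equals the saturation
`(⟨x^{pos(u)} − x^{neg(u)} : u ∈ L⟩ : (x₁⋯xₙ)^∞)`. -/
theorem lattice_ideal_eq_saturation (M : AddSubgroup (Fin n → ℤ))
    (L : Set (Fin n → ℤ)) (hL : AddSubgroup.closure L = M)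
    (g : MvPolynomial (Fin n) k) :
    g ∈ latticeIdealOf k M ↔
      ∃ m : ℕ, (∏ i : Fin n, X i) ^ m * g ∈
        Ideal.span {f | ∃ u ∈ L, f = monPos k u - monNeg k u} := by
  constructor
  · exact fun hg => Ideal.mem_saturation.mp (latticeIdealOf_le_saturation M hL hg)
  · rintro ⟨m, hm⟩
    exact mem_latticeIdealOf_of_pow_mul_mem M
      (span_binomial_le_latticeIdealOf M (hL ▸ AddSubgroup.subset_closure) hm)

end
end
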